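/- The monic Laguerre polynomials satisfy the rescaling connection formula L^b_k(x/2) = 2^{-k}·∑_{i=0}^{k} C(b+k, k-i)·(k!/i!)·(-1)^{i-k}·L^b_i(x) for all real x, b > -1 and every nonnegative integer k. -/

import Mathlib

/-!
With `a k j = (-1)^(k-j) C(k,j) Γ(b+k+1)/Γ(b+j+1)`, the polynomial
`ℓ_k = ∑ⱼ a k j Xʲ` (which is `(-1)^k k!` times the classical Laguerre polynomial) is monic of
degree `k` and orthogonal to every `Xʲ`, `j < k`: by `Γ(b+t+j+1) = Γ(b+t+1) (b+t+1)⁽ʲ⁾` that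
integral is a `k`-th finite difference of a polynomial of degree `j`. Since the Laguerre weight is
positive definite on polynomials, monic orthogonal polynomials are unique, so `L k = ℓ_k`.
The coefficient of `L_i` in the formula is `a k i`, and comparing coefficients of `xʲ` reduces
the rescaling formula to `∑ᵢ a k i * a i j = 2^(k-j) a k j`, that is, to
`∑ᵢ C(k,i) C(i,j) = C(k,j) 2^(k-j)`.
-/

open Polynomial Finset MeasureTheory Real

namespace Polynomial

theorem sum_range_neg_one_pow_mul_choose_mul_eval_eq_zero {R : Type*} [CommRing R] {P : R[X]}
    {n : ℕ} (hP : P.natDegree < n) :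
    ∑ t ∈ range (n + 1), (-1 : R) ^ (n - t) * n.choose t * P.eval (t : R) = 0 := by
  have := congr_fun (fwdDiff_iter_eq_zero_of_degree_lt hP) 0
  rw [fwdDiff_iter_eq_sum_shift] at this
  simpa [zsmul_eq_mul] using this

theorem Sequence.map_mul_eq_zero_of_mem_degreeLT {R : Type*} [CommRing R] (S : Sequence R)
    {n : ℕ} (hS : ∀ i < n, IsUnit (S i).leadingCoeff) (φ : R[X] →ₗ[R] R) {Q : R[X]}
    (hQ : ∀ i < n, φ (S i * Q) = 0) {r : R[X]} (hr : r ∈ R[X]_n) : φ (r * Q) = 0 := by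
  rw [← S.span_degreeLT hS] at hr
  refine Submodule.span_induction (p := fun r _ => φ (r * Q) = 0) ?_ ?_ ?_ ?_ hr
  · rintro _ ⟨i, hi, rfl⟩
    exact hQ i hi
  · simp
  · intro x y _ _ hx hy
    rw [add_mul, map_add, hx, hy, add_zero]
  · intro c x _ hx
    rw [smul_mul_assoc, map_smul, hx, smul_zero]

theorem eq_of_monic_of_orthogonal_degreeLT {R : Type*} [CommRing R]
    (φ : R[X] →ₗ[R] R) (hφ : ∀ q, φ (q * q) = 0 → q = 0) {n : ℕ} {P Q : R[X]}
    (hP : P.Monic) (hQ : Q.Monic) (hPn : P.natDegree = n) (hQn : Q.natDegree = n)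
    (hPorth : ∀ r ∈ R[X]_n, φ (r * P) = 0) (hQorth : ∀ r ∈ R[X]_n, φ (r * Q) = 0) :
    P = Q := by
  nontriviality R
  have hsub : P - Q ∈ R[X]_n := by
    rw [mem_degreeLT, ← hPn, ← degree_eq_natDegree hP.ne_zero]
    refine degree_sub_lt_left ?_ hP.ne_zero (by rw [hP.leadingCoeff, hQ.leadingCoeff])
    rw [degree_eq_natDegree hP.ne_zero, degree_eq_natDegree hQ.ne_zero, hPn, hQn]
  refine sub_eq_zero.mp (hφ _ ?_)
  rw [mul_sub, map_sub, hPorth _ hsub, hQorth _ hsub, sub_zero]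

end Polynomial

theorem Nat.sum_range_choose_mul_choose (k j : ℕ) :
    ∑ i ∈ range (k + 1), k.choose i * i.choose j = k.choose j * 2 ^ (k - j) := by
  rcases lt_or_ge k j with hkj | hjk
  · rw [Nat.choose_eq_zero_of_lt hkj, zero_mul]
    exact sum_eq_zero fun i hi => by
      rw [Nat.choose_eq_zero_of_lt (show i < j by have := mem_range.mp hi; omega), mul_zero]
  obtain ⟨m, rfl⟩ := Nat.exists_eq_add_of_le hjk
  rw [show j + m + 1 = j + (m + 1) by ring, sum_range_add, Nat.add_sub_cancel_left,
    ← Nat.sum_range_choose, mul_sum]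
  rw [sum_eq_zero fun i hi => by rw [Nat.choose_eq_zero_of_lt (mem_range.mp hi), mul_zero],
    zero_add]
  exact sum_congr rfl fun i _ => by
    rw [Nat.choose_mul (Nat.le_add_right j i), Nat.add_sub_cancel_left, Nat.add_sub_cancel_left]

theorem Real.Gamma_add_nat_eq_mul_ascPochhammer {s : ℝ} (hs : ∀ k : ℕ, s ≠ -k) (n : ℕ) :
    Gamma (s + n) = Gamma s * (ascPochhammer ℝ n).eval s := by
  induction n with
  | zero => simp
  | succ n ih =>
    have hsn : s + n ≠ 0 := fun h => hs n (by linarith)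
    rw [Nat.cast_succ, ← add_assoc, Gamma_add_one hsn, ih, ascPochhammer_succ_eval]
    ring

theorem Real.Gamma_add_nat_add_one_pos {b : ℝ} (hb : -1 < b) (n : ℕ) :
    0 < Gamma (b + n + 1) :=
  Gamma_pos_of_pos (by linarith [n.cast_nonneg (α := ℝ)])

theorem exp_neg_mul_rpow_add_nat_add_one_sub_one {x : ℝ} (hx : 0 < x) (b : ℝ) (j : ℕ) :
    exp (-x) * x ^ (b + j + 1 - 1) = x ^ b * exp (-x) * x ^ j := by
  rw [add_sub_cancel_right, rpow_add hx, rpow_natCast]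
  ring

theorem integrableOn_rpow_mul_exp_neg_mul_pow {b : ℝ} (hb : -1 < b) (j : ℕ) :
    IntegrableOn (fun x : ℝ => x ^ b * exp (-x) * x ^ j) (Set.Ioi 0) :=
  (GammaIntegral_convergent (by linarith [j.cast_nonneg (α := ℝ)])).congr_fun
    (fun _ hx => exp_neg_mul_rpow_add_nat_add_one_sub_one hx b j) measurableSet_Ioi

theorem integral_rpow_mul_exp_neg_mul_pow {b : ℝ} (hb : -1 < b) (j : ℕ) :
    ∫ x in Set.Ioi (0 : ℝ), x ^ b * exp (-x) * x ^ j = Gamma (b + j + 1) := by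
  rw [Gamma_eq_integral (by linarith [j.cast_nonneg (α := ℝ)])]
  exact setIntegral_congr_fun measurableSet_Ioi
    fun _ hx => (exp_neg_mul_rpow_add_nat_add_one_sub_one hx b j).symm

theorem integrableOn_rpow_mul_exp_neg_mul_eval {b : ℝ} (hb : -1 < b) (p : ℝ[X]) :
    IntegrableOn (fun x : ℝ => x ^ b * exp (-x) * p.eval x) (Set.Ioi 0) := by
  simp_rw [eval_eq_sum_range, Finset.mul_sum]
  refine integrable_finsetSum _ fun j _ => ?_
  simpa only [mul_left_comm] using
    (integrableOn_rpow_mul_exp_neg_mul_pow hb j).const_mul (p.coeff j)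

noncomputable def laguerreFunctional (b : ℝ) (hb : -1 < b) : ℝ[X] →ₗ[ℝ] ℝ where
  toFun p := ∫ x in Set.Ioi (0 : ℝ), x ^ b * exp (-x) * p.eval x
  map_add' p q := by
    simp only [eval_add, mul_add]
    exact integral_add (integrableOn_rpow_mul_exp_neg_mul_eval hb p)
      (integrableOn_rpow_mul_exp_neg_mul_eval hb q)
  map_smul' c p := by
    simp only [eval_smul, smul_eq_mul, RingHom.id_apply, ← integral_const_mul]
    congr 1 with x
    ring

theorem laguerreFunctional_apply {b : ℝ} (hb : -1 < b) (p : ℝ[X]) :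
    laguerreFunctional b hb p = ∫ x in Set.Ioi (0 : ℝ), x ^ b * exp (-x) * p.eval x :=
  rfl

theorem laguerreFunctional_X_pow {b : ℝ} (hb : -1 < b) (j : ℕ) :
    laguerreFunctional b hb (X ^ j) = Gamma (b + j + 1) := by
  simpa [laguerreFunctional_apply] using integral_rpow_mul_exp_neg_mul_pow hb j

theorem laguerreFunctional_mul_self_pos {b : ℝ} (hb : -1 < b) {q : ℝ[X]} (hq : q ≠ 0) :
    0 < laguerreFunctional b hb (q * q) := by
  have hnonneg : 0 ≤ᵐ[volume.restrict (Set.Ioi 0)]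
      fun x => x ^ b * exp (-x) * (q * q).eval x := by
    filter_upwards [ae_restrict_mem measurableSet_Ioi] with x hx
    rw [eval_mul, ← sq]
    exact mul_nonneg (mul_nonneg (rpow_nonneg hx.le b) (exp_nonneg _)) (sq_nonneg _)
  rw [laguerreFunctional_apply,
    setIntegral_pos_iff_support_of_nonneg_ae hnonneg (integrableOn_rpow_mul_exp_neg_mul_eval hb _)]
  have hsupp : Set.Ioi 0 \ {x | q.IsRoot x} ⊆
      Function.support (fun x => x ^ b * exp (-x) * (q * q).eval x) ∩ Set.Ioi 0 := by
    rintro x ⟨hx, hroot⟩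
    refine ⟨?_, hx⟩
    simp only [Function.mem_support, eval_mul]
    exact mul_ne_zero (mul_ne_zero (rpow_pos_of_pos hx b).ne' (exp_ne_zero _))
      (mul_ne_zero hroot hroot)
  calc (0 : ENNReal) < volume (Set.Ioi (0 : ℝ) \ {x | q.IsRoot x}) := by
        rw [measure_sdiff_null ((finite_setOfPred_isRoot hq).measure_zero _), Real.volume_Ioi]
        exact ENNReal.zero_lt_top
    _ ≤ _ := measure_mono hsupp

noncomputable def laguerreCoeff (b : ℝ) (n j : ℕ) : ℝ :=
  (-1) ^ (n - j) * n.choose j * (Gamma (b + n + 1) / Gamma (b + j + 1))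

noncomputable def laguerre (b : ℝ) (n : ℕ) : ℝ[X] :=
  ∑ j ∈ range (n + 1), C (laguerreCoeff b n j) * X ^ j

theorem laguerreCoeff_of_lt (b : ℝ) {n j : ℕ} (h : n < j) : laguerreCoeff b n j = 0 := by
  simp [laguerreCoeff, Nat.choose_eq_zero_of_lt h]

theorem laguerreCoeff_self {b : ℝ} (hb : -1 < b) (n : ℕ) : laguerreCoeff b n n = 1 := by
  simp [laguerreCoeff, (Gamma_add_nat_add_one_pos hb n).ne']

theorem laguerreCoeff_eq_Gamma_div (b : ℝ) {k i : ℕ} (hik : i ≤ k) :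
    laguerreCoeff b k i = Gamma (b + k + 1) / (Gamma (b + i + 1) * Gamma ((k : ℝ) - i + 1)) *
      (k.factorial / i.factorial : ℝ) * (-1) ^ (k - i) := by
  rw [show (k : ℝ) - i + 1 = ↑(k - i) + 1 by push_cast [hik]; ring, Gamma_nat_eq_factorial,
    laguerreCoeff, Nat.cast_choose ℝ hik]
  field_simp

theorem sum_laguerreCoeff_mul_laguerreCoeff {b : ℝ} (hb : -1 < b) (k j : ℕ) :
    ∑ i ∈ range (k + 1), laguerreCoeff b k i * laguerreCoeff b i j =
      2 ^ (k - j) * laguerreCoeff b k j := by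
  have hterm : ∀ i ∈ range (k + 1), laguerreCoeff b k i * laguerreCoeff b i j =
      (-1) ^ (k - j) * (Gamma (b + k + 1) / Gamma (b + j + 1)) *
        ((k.choose i * i.choose j : ℕ) : ℝ) := by
    intro i hi
    rcases lt_or_ge i j with hij | hji
    · simp [laguerreCoeff_of_lt b hij, Nat.choose_eq_zero_of_lt hij]
    have hsign : (-1 : ℝ) ^ (k - j) = (-1) ^ (k - i) * (-1) ^ (i - j) := by
      rw [← pow_add]
      congr 1
      have := mem_range.mp hi
      omega
    have := (Gamma_add_nat_add_one_pos hb i).ne'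
    rw [laguerreCoeff, laguerreCoeff, hsign]
    push_cast
    field_simp
  rw [sum_congr rfl hterm, ← mul_sum, ← Nat.cast_sum, Nat.sum_range_choose_mul_choose,
    laguerreCoeff]
  push_cast
  ring

theorem coeff_laguerre (b : ℝ) (n j : ℕ) : (laguerre b n).coeff j = laguerreCoeff b n j := by
  simp only [laguerre, finsetSum_coeff, coeff_C_mul_X_pow, sum_ite_eq, mem_range]
  split_ifs with h
  · rfl
  · exact (laguerreCoeff_of_lt b (by omega)).symm

theorem natDegree_laguerre {b : ℝ} (hb : -1 < b) (n : ℕ) : (laguerre b n).natDegree = n := by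
  refine natDegree_eq_of_le_of_coeff_ne_zero ?_ (by simp [coeff_laguerre, laguerreCoeff_self hb])
  exact natDegree_le_iff_coeff_eq_zero.mpr fun j hj => by
    rw [coeff_laguerre, laguerreCoeff_of_lt b (by exact_mod_cast hj)]

theorem monic_laguerre {b : ℝ} (hb : -1 < b) (n : ℕ) : (laguerre b n).Monic :=
  monic_of_natDegree_le_of_coeff_eq_one n (natDegree_laguerre hb n).le
    (by rw [coeff_laguerre, laguerreCoeff_self hb])

theorem laguerre_comp_C_inv_two_mul_X {b : ℝ} (hb : -1 < b) (k : ℕ) :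
    (laguerre b k).comp (C 2⁻¹ * X) =
      C (2⁻¹ ^ k) * ∑ i ∈ range (k + 1), C (laguerreCoeff b k i) * laguerre b i := by
  ext j
  simp only [comp_C_mul_X_coeff, coeff_C_mul, finsetSum_coeff, coeff_laguerre,
    sum_laguerreCoeff_mul_laguerreCoeff hb]
  rcases lt_or_ge k j with hkj | hjk
  · simp [laguerreCoeff_of_lt b hkj]
  · obtain ⟨m, rfl⟩ := Nat.exists_eq_add_of_le hjk
    rw [Nat.add_sub_cancel_left, pow_add, inv_pow 2 m]
    field_simp

theorem laguerreFunctional_X_pow_mul_laguerre {b : ℝ} (hb : -1 < b) {j n : ℕ} (hjn : j < n) :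
    laguerreFunctional b hb (X ^ j * laguerre b n) = 0 := by
  set P : ℝ[X] := (ascPochhammer ℝ j).comp (X + C (b + 1))
  have hP : P.natDegree < n := by
    rwa [natDegree_comp, ascPochhammer_natDegree, natDegree_X_add_C, mul_one]
  have hterm : ∀ t ∈ range (n + 1),
      laguerreFunctional b hb (X ^ j * (C (laguerreCoeff b n t) * X ^ t)) =
        Gamma (b + n + 1) * ((-1) ^ (n - t) * n.choose t * P.eval (t : ℝ)) := by
    intro t _
    have hΓ : Gamma (b + ↑(t + j) + 1) = Gamma (b + t + 1) * P.eval (t : ℝ) := by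
      rw [show b + ↑(t + j) + 1 = b + t + 1 + j by push_cast; ring,
        Gamma_add_nat_eq_mul_ascPochhammer
          fun k => by linarith [t.cast_nonneg (α := ℝ), k.cast_nonneg (α := ℝ)]]
      simp only [P, eval_comp, eval_add, eval_X, eval_C]
      ring_nf
    have := (Gamma_add_nat_add_one_pos hb t).ne'
    rw [mul_left_comm, ← pow_add, C_mul', map_smul, laguerreFunctional_X_pow, smul_eq_mul,
      add_comm j, hΓ, laguerreCoeff]
    field_simp
  rw [laguerre, mul_sum, map_sum, sum_congr rfl hterm, ← mul_sum,
    sum_range_neg_one_pow_mul_choose_mul_eval_eq_zero hP, mul_zero]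

theorem laguerreFunctional_mul_laguerre {b : ℝ} (hb : -1 < b) {n : ℕ} {r : ℝ[X]}
    (hr : r ∈ ℝ[X]_n) : laguerreFunctional b hb (r * laguerre b n) = 0 :=
  Sequence.map_mul_eq_zero_of_mem_degreeLT ⟨(X ^ ·), degree_X_pow⟩ (fun i _ => by simp) _
    (fun _ hj => laguerreFunctional_X_pow_mul_laguerre hb hj) hr

theorem eq_laguerre_of_orthogonal {b : ℝ} (hb : -1 < b) {L : ℕ → ℝ[X]}
    (hmonic : ∀ n, (L n).Monic) (hdeg : ∀ n, (L n).natDegree = n)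
    (horth : ∀ m n, m ≠ n → laguerreFunctional b hb (L m * L n) = 0) (n : ℕ) :
    L n = laguerre b n := by
  let S : Sequence ℝ := ⟨L, fun i => by rw [degree_eq_natDegree (hmonic i).ne_zero, hdeg]⟩
  refine eq_of_monic_of_orthogonal_degreeLT (laguerreFunctional b hb)
    (fun q hq => by_contra fun h => (laguerreFunctional_mul_self_pos hb h).ne' hq)
    (hmonic n) (monic_laguerre hb n) (hdeg n) (natDegree_laguerre hb n)
    (fun _ => S.map_mul_eq_zero_of_mem_degreeLT (fun i _ => by simp [S, (hmonic i).leadingCoeff])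
      _ fun i hi => horth i n hi.ne)
    (fun _ => laguerreFunctional_mul_laguerre hb)

/-- The monic Laguerre polynomials with parameter `b > -1` satisfy the rescaling
connection formula
`L^b_k(x/2) = 2^{-k} ∑_{i=0}^{k} C(b+k, k-i) (k!/i!) (-1)^{i-k} L^b_i(x)`,
where `C(b+k, k-i) = Γ(b+k+1)/(Γ(b+i+1)Γ(k-i+1))`. -/
theorem monic_laguerre_rescaling (b : ℝ) (hb : -1 < b)
    (L : ℕ → Polynomial ℝ)
    (hmonic : ∀ n : ℕ, (L n).Monic)
    (hdeg : ∀ n : ℕ, (L n).natDegree = n)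
    (horth : ∀ m n : ℕ, m ≠ n →
      ∫ x in Set.Ioi (0 : ℝ),
        x ^ b * Real.exp (-x) * (L m).eval x * (L n).eval x = 0)
    (k : ℕ) (x : ℝ) :
    (L k).eval (x / 2) =
      (2 : ℝ)⁻¹ ^ k * ∑ i ∈ Finset.range (k + 1),
        (Real.Gamma (b + (k : ℝ) + 1) /
            (Real.Gamma (b + (i : ℝ) + 1) * Real.Gamma ((k : ℝ) - (i : ℝ) + 1))) *
          ((Nat.factorial k : ℝ) / (Nat.factorial i : ℝ)) * (-1 : ℝ) ^ (k - i) *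
          (L i).eval x := by
  have hL : ∀ n, L n = laguerre b n := eq_laguerre_of_orthogonal hb hmonic hdeg fun m n hmn => by
    simpa only [laguerreFunctional_apply, eval_mul, mul_assoc] using horth m n hmn
  have hscale := congrArg (eval x) (laguerre_comp_C_inv_two_mul_X hb k)
  simp only [eval_comp, eval_mul, eval_C, eval_X, eval_finsetSum] at hscale
  rw [hL, ← inv_mul_eq_div, hscale]
  congr 1
  refine sum_congr rfl fun i hi => ?_
  rw [hL, ← laguerreCoeff_eq_Gamma_div b (Nat.lt_succ_iff.mp (mem_range.mp hi))]
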